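/- arXiv:2201.12247 — 7 statements merged into one kernel-verified Lean document; each statement's English description precedes it below -/
import Mathlib

section
/- Let F : ℝ^d → ℝ^d be L-Lipschitz with L > 0 and have a weak Minty solution u* with parameter ρ > 0 satisfying ρ < 1/L. Let (u_k)_{k≥0} be the OGDA+ iterates with step size a and parameter γ satisfying 0 < γ ≤ 1, a > ρ and a·L ≤ (1 − γ)/(1 + γ). Then for every k ≥ 1, min_{0 ≤ i ≤ k−1} ‖F(u_i)‖² ≤ (1/(k·a·γ·(a − ρ)))·‖u₀ + a·F(u₀) − u*‖². -/
/-!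
With the shadow iterates `z i = u i + a • F (u (i - 1))` the OGDA+ update becomes
`z (i + 1) = z i - (a * γ) • F (u i)`. The weak Minty inequality at `u i` makes `‖z i - u*‖²` drop
by `a γ (a - ρ) ‖F (u i)‖²`, up to an error `a² γ (γ ‖F uᵢ‖² + ‖F uᵢ - F uᵢ₋₁‖² - ‖F uᵢ₋₁‖²)`.
Lipschitz continuity and the step size condition `a L (1 + γ) ≤ 1 - γ` (which forces `γ < 1`)
let the residual `‖F uᵢ - F uᵢ₋₁‖²` absorb this error, so that
`(1 - γ) ‖z i - u*‖² + a² (1 + γ) ‖F uᵢ - F uᵢ₋₁‖²` is a Lyapunov function; telescoping it bounds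
`∑ ‖F uᵢ‖²`, hence the minimum.
-/

open scoped RealInnerProductSpace

-- With `g = ‖F uᵢ‖`, `gPrev = ‖F uᵢ₋₁‖`, `r = ‖F uᵢ - F uᵢ₋₁‖`, `rNext = ‖F uᵢ₊₁ - F uᵢ‖`.
-- The left side times `1 + γ` is largest at `g = gPrev + r`, where it is
-- `-γ ((1 - γ) gPrev - (1 + γ) r)²`.
lemma ogda_residual_scalar_ineq (γ gPrev g r rNext : ℝ) (hγ0 : 0 < γ) (hγ1 : γ < 1) (hr : 0 ≤ r)
    (hg : 0 ≤ g) (hrNext : 0 ≤ rNext) (hrNext_le : (1 + γ) * rNext ≤ (1 - γ) * (γ * g + r))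
    (hg_le : g ≤ gPrev + r) :
    γ * (1 - γ) * (γ * g ^ 2 + r ^ 2 - gPrev ^ 2) + (1 + γ) * (rNext ^ 2 - r ^ 2) ≤ 0 := by
  have hrNext_sq : ((1 + γ) * rNext) ^ 2 ≤ ((1 - γ) * (γ * g + r)) ^ 2 :=
    pow_le_pow_left₀ (by positivity) hrNext_le 2
  have hg_sq : g ^ 2 ≤ (gPrev + r) ^ 2 := pow_le_pow_left₀ hg hg_le 2
  have hγg_sq : (γ * g + r) ^ 2 ≤ (γ * (gPrev + r) + r) ^ 2 := by gcongr
  have hc : 0 ≤ γ ^ 2 * (1 - γ) * (1 + γ) := by have := hγ1.le; positivity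
  refine nonpos_of_mul_nonpos_right ?_ (by linarith : (0 : ℝ) < 1 + γ)
  linarith [mul_nonneg hγ0.le (sq_nonneg ((1 - γ) * gPrev - (1 + γ) * r)),
    mul_le_mul_of_nonneg_left hg_sq hc, mul_le_mul_of_nonneg_left hγg_sq (sq_nonneg (1 - γ))]

lemma sum_le_sub_of_succ_add_le {V f : ℕ → ℝ} (h : ∀ i, V (i + 1) + f i ≤ V i) (n : ℕ) :
    ∑ i ∈ Finset.range n, f i ≤ V 0 - V n := by
  rw [← Finset.sum_range_sub']
  exact Finset.sum_le_sum fun i _ => by linarith [h i]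

lemma Finset.inf'_mul_card_le_sum {ι : Type*} (s : Finset ι) (hs : s.Nonempty) (f : ι → ℝ) :
    s.inf' hs f * s.card ≤ ∑ i ∈ s, f i := by
  simpa [nsmul_eq_mul, mul_comm] using
    s.card_nsmul_le_sum f (s.inf' hs f) fun i hi => s.inf'_le f hi

variable {E : Type*} [NormedAddCommGroup E] [InnerProductSpace ℝ E]

lemma weakMinty_norm_sub_smul_sq_le {p v w ustar : E} {ρ a γ : ℝ}
    (hw : ⟪w, p - ustar⟫ ≥ -(ρ / 2) * ‖w‖ ^ 2) (haγ : 0 ≤ a * γ) :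
    ‖p + a • v - (a * γ) • w - ustar‖ ^ 2 + a * γ * (a - ρ) * ‖w‖ ^ 2
      ≤ ‖p + a • v - ustar‖ ^ 2 + a ^ 2 * γ * (γ * ‖w‖ ^ 2 + ‖w - v‖ ^ 2 - ‖v‖ ^ 2) := by
  have hinner : ⟪w, p + a • v - ustar⟫ = ⟪w, p - ustar⟫ + a * ⟪w, v⟫ := by
    rw [show p + a • v - ustar = (p - ustar) + a • v by abel, inner_add_right,
      real_inner_smul_right]
  have hexpand : ‖p + a • v - (a * γ) • w - ustar‖ ^ 2 = ‖p + a • v - ustar‖ ^ 2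
      - 2 * (a * γ) * ⟪w, p + a • v - ustar⟫ + (a * γ) ^ 2 * ‖w‖ ^ 2 := by
    rw [show p + a • v - (a * γ) • w - ustar = (p + a • v - ustar) - (a * γ) • w by abel,
      norm_sub_sq_real, real_inner_smul_right, norm_smul, real_inner_comm, mul_pow,
      Real.norm_eq_abs, sq_abs]
    ring
  rw [hexpand, hinner, norm_sub_sq_real w v]
  linarith [mul_le_mul_of_nonneg_left hw haγ]

section OGDA

variable {F : E → E} {u : ℕ → E} {a γ : ℝ}

-- At `i = 0`, `u (i - 1)` is `u 0`: this is the initialisation `u₋₁ = u₀`.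
noncomputable def ogdaLyapunov (F : E → E) (u : ℕ → E) (ustar : E) (a γ : ℝ) (i : ℕ) : ℝ :=
  (1 - γ) * ‖u i + a • F (u (i - 1)) - ustar‖ ^ 2
    + a ^ 2 * (1 + γ) * ‖F (u i) - F (u (i - 1))‖ ^ 2

lemma ogdaLyapunov_zero (ustar : E) :
    ogdaLyapunov F u ustar a γ 0 = (1 - γ) * ‖u 0 + a • F (u 0) - ustar‖ ^ 2 := by
  simp [ogdaLyapunov]

lemma ogdaLyapunov_nonneg (ustar : E) (hγ0 : 0 ≤ γ) (hγ1 : γ ≤ 1) (i : ℕ) :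
    0 ≤ ogdaLyapunov F u ustar a γ i := by
  have := sub_nonneg.2 hγ1
  unfold ogdaLyapunov
  positivity

lemma ogda_norm_sub_succ_le {L : ℝ}
    (hupd : ∀ k : ℕ, u (k + 1) = u k - a • ((1 + γ) • F (u k) - F (u (k - 1))))
    (hLip : ∀ x y, ‖F x - F y‖ ≤ L * ‖x - y‖) (ha : 0 ≤ a) (hL : 0 ≤ L) (hγ : 0 ≤ γ) (i : ℕ) :
    ‖F (u (i + 1)) - F (u i)‖ ≤ a * L * (γ * ‖F (u i)‖ + ‖F (u i) - F (u (i - 1))‖) :=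
  calc ‖F (u (i + 1)) - F (u i)‖ ≤ L * ‖u (i + 1) - u i‖ := hLip _ _
    _ = a * L * ‖γ • F (u i) + (F (u i) - F (u (i - 1)))‖ := by
      rw [hupd, sub_sub_cancel_left, norm_neg, norm_smul, Real.norm_eq_abs, abs_of_nonneg ha,
        show (1 + γ) • F (u i) - F (u (i - 1)) = γ • F (u i) + (F (u i) - F (u (i - 1))) by module]
      ring
    _ ≤ a * L * (γ * ‖F (u i)‖ + ‖F (u i) - F (u (i - 1))‖) := by
      gcongr
      refine (norm_add_le _ _).trans ?_
      rw [norm_smul, Real.norm_eq_abs, abs_of_nonneg hγ]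

lemma ogdaLyapunov_succ_add_le {L ρ : ℝ} {ustar : E}
    (hupd : ∀ k : ℕ, u (k + 1) = u k - a • ((1 + γ) • F (u k) - F (u (k - 1))))
    (hLip : ∀ x y, ‖F x - F y‖ ≤ L * ‖x - y‖)
    (hweak : ∀ x, ⟪F x, x - ustar⟫ ≥ -(ρ / 2) * ‖F x‖ ^ 2) (ha : 0 ≤ a) (hL : 0 ≤ L)
    (hγ0 : 0 < γ) (hγ1 : γ < 1) (hstep : a * L * (1 + γ) ≤ 1 - γ) (i : ℕ) :
    ogdaLyapunov F u ustar a γ (i + 1) + (1 - γ) * (a * γ * (a - ρ)) * ‖F (u i)‖ ^ 2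
      ≤ ogdaLyapunov F u ustar a γ i := by
  set v := F (u (i - 1))
  have hshadow : u (i + 1) + a • F (u i) = u i + a • v - (a * γ) • F (u i) := by
    rw [hupd]
    module
  have hres := ogda_norm_sub_succ_le hupd hLip ha hL hγ0.le i
  have hres' : (1 + γ) * ‖F (u (i + 1)) - F (u i)‖ ≤ (1 - γ) * (γ * ‖F (u i)‖ + ‖F (u i) - v‖) :=
    calc (1 + γ) * ‖F (u (i + 1)) - F (u i)‖
        ≤ a * L * (1 + γ) * (γ * ‖F (u i)‖ + ‖F (u i) - v‖) := by
          linarith [mul_le_mul_of_nonneg_left hres (by linarith : (0 : ℝ) ≤ 1 + γ)]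
      _ ≤ (1 - γ) * (γ * ‖F (u i)‖ + ‖F (u i) - v‖) := by gcongr
  have hscalar := ogda_residual_scalar_ineq γ ‖v‖ ‖F (u i)‖ ‖F (u i) - v‖
    ‖F (u (i + 1)) - F (u i)‖ hγ0 hγ1 (norm_nonneg _) (norm_nonneg _) (norm_nonneg _) hres'
    (norm_le_norm_add_norm_sub' _ _)
  have hminty := weakMinty_norm_sub_smul_sq_le (v := v) (a := a) (hweak (u i))
    (mul_nonneg ha hγ0.le)
  unfold ogdaLyapunov
  rw [Nat.add_sub_cancel, hshadow]
  linarith [mul_le_mul_of_nonneg_left hminty (sub_nonneg.2 hγ1.le),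
    mul_le_mul_of_nonneg_left hscalar (sq_nonneg a)]

end OGDA

theorem ogda_plus_weak_minty (d : ℕ)
    (F : EuclideanSpace ℝ (Fin d) → EuclideanSpace ℝ (Fin d))
    (L ρ a γ : ℝ) (ustar : EuclideanSpace ℝ (Fin d))
    (hL : 0 < L) (hLip : ∀ u v, ‖F u - F v‖ ≤ L * ‖u - v‖)
    (hρ : 0 < ρ)
    (hweak : ∀ u, ⟪F u, u - ustar⟫ ≥ -(ρ / 2) * ‖F u‖ ^ 2)
    (hγ0 : 0 < γ) (hγ1 : γ ≤ 1) (haρ : ρ < a)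
    (hstep : a * L ≤ (1 - γ) / (1 + γ))
    (u : ℕ → EuclideanSpace ℝ (Fin d))
    (hupd : ∀ k : ℕ, u (k + 1) = u k - a • ((1 + γ) • F (u k) - F (u (k - 1))))
    (k : ℕ) (hk : 1 ≤ k) :
    (Finset.range k).inf' (Finset.nonempty_range_iff.mpr (by omega))
        (fun i => ‖F (u i)‖ ^ 2)
      ≤ (1 / (k * a * γ * (a - ρ))) * ‖u 0 + a • F (u 0) - ustar‖ ^ 2 := by
  have ha : 0 < a := hρ.trans haρ
  have hstep' : a * L * (1 + γ) ≤ 1 - γ := (le_div_iff₀ (by linarith)).1 hstep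
  have hγ1' : γ < 1 := by nlinarith [mul_pos ha hL]
  have hdescent := sum_le_sub_of_succ_add_le
    (ogdaLyapunov_succ_add_le hupd hLip hweak ha.le hL.le hγ0 hγ1' hstep') k
  rw [← Finset.mul_sum, ogdaLyapunov_zero] at hdescent
  have hVk := ogdaLyapunov_nonneg (F := F) (u := u) (a := a) ustar hγ0.le hγ1 k
  have hsum : a * γ * (a - ρ) * ∑ i ∈ Finset.range k, ‖F (u i)‖ ^ 2
      ≤ ‖u 0 + a • F (u 0) - ustar‖ ^ 2 :=
    le_of_mul_le_mul_left (by linarith) (sub_pos.2 hγ1')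
  have hmin := Finset.inf'_mul_card_le_sum (Finset.range k)
    (Finset.nonempty_range_iff.mpr (by omega)) (fun i => ‖F (u i)‖ ^ 2)
  rw [Finset.card_range] at hmin
  have hc : 0 < a * γ * (a - ρ) := by have := sub_pos.2 haρ; positivity
  rw [one_div_mul_eq_div, le_div_iff₀ (by positivity)]
  linarith [mul_le_mul_of_nonneg_left hmin hc.le]
end

section
/- Let F : ℝ^d → ℝ^d be L-Lipschitz with L > 0 and have a weak Minty solution u* with parameter ρ > 0. Let 0 < γ ≤ 1, 0 ≤ λ ≤ 2/γ, and let (u_k)_{k≥0} be the OGDA+ iterates with step size a > 0 satisfying a·λ·γ > ρ and a·L ≤ (2 − λ·γ − γ)/(2 − λ·γ + γ). Then for every k ≥ 1, (1/k)·Σ_{i=0}^{k−1} ‖F(u_i)‖² ≤ (1/(k·a·γ·(a·λ·γ − ρ)))·‖u₀ + a·F(u₀) − u*‖². -/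
/-!
Along the shifted sequence `z k = u k + a • F (u (k - 1))` the OGDA+ update reads
`z (k + 1) = z k - (a * γ) • F (u k)`. The energy
`V k = L * ‖z k - u*‖ ^ 2 + a * ‖F (u k) - F (u (k - 1))‖ ^ 2` decreases by at least
`L * a * γ * (a * λ * γ - ρ) * ‖F (u k)‖ ^ 2` per step: the weak Minty condition bounds the inner
product in the expansion of `‖z (k + 1) - u*‖ ^ 2`, Lipschitz continuity bounds the new difference
`F (u (k + 1)) - F (u k)` by `F (u k)` and the old difference, and the step-size condition makes
the resulting quadratic form in `‖F (u k)‖` and `‖F (u k) - F (u (k - 1))‖` nonpositive.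
Telescoping, with `V 0 = L * ‖u 0 + a • F (u 0) - u*‖ ^ 2` and `V k ≥ 0`, gives the bound.
-/

open scoped RealInnerProductSpace

variable {E : Type*} [NormedAddCommGroup E] [InnerProductSpace ℝ E]

theorem quadratic_le_of_step_size_condition {c γ m : ℝ} (hc : 0 < c) (hγ : 0 < γ)
    (hmγ : 0 < m + 2 * γ) (hcm : c * (m + 2 * γ) ≤ m) (x y : ℝ) :
    c ^ 2 * (γ * x + y) ^ 2 + 2 * c * γ * x * y ≤ c * γ * m * x ^ 2 + y ^ 2 := by
  have hcγ : 0 < c * γ := mul_pos hc hγ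
  have hm : 0 < m := (mul_pos hc hmγ).trans_le hcm
  have hA : 0 < c * γ * (m - c * γ) := mul_pos hcγ (by nlinarith)
  have hdiscr : 0 ≤ m * (1 - c) - 2 * c * γ := by linarith
  rw [← sub_nonneg]
  refine (mul_nonneg_iff_of_pos_left hA).mp ?_
  -- completing the square in `x`; the discriminant condition is exactly `hcm`
  have hsq : c * γ * (m - c * γ) *
        (c * γ * m * x ^ 2 + y ^ 2 - (c ^ 2 * (γ * x + y) ^ 2 + 2 * c * γ * x * y))
      = (c * γ * (m - c * γ) * x - c * γ * (1 + c) * y) ^ 2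
        + c * γ * (1 + c) * (m * (1 - c) - 2 * c * γ) * y ^ 2 := by ring
  rw [hsq]
  have := hc.le
  positivity

namespace OGDAPlus

def IsIterate (F : E → E) (a γ : ℝ) (u : ℕ → E) : Prop :=
  ∀ k : ℕ, u (k + 1) = u k - a • ((1 + γ) • F (u k) - F (u (k - 1)))

variable {F : E → E} {u : ℕ → E} {a γ : ℝ}

/-- `u (i - 1)` is `u 0` at `i = 0` (truncated subtraction), matching the convention `u₋₁ = u₀`. -/
def shift (F : E → E) (a : ℝ) (u : ℕ → E) (i : ℕ) : E := u i + a • F (u (i - 1))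

theorem shift_succ (hupd : IsIterate F a γ u) (i : ℕ) :
    shift F a u (i + 1) = shift F a u i - (a * γ) • F (u i) := by
  simp only [shift, Nat.add_sub_cancel, hupd i]
  module

theorem norm_apply_succ_sub_le {L : ℝ} (hLip : ∀ u v, ‖F u - F v‖ ≤ L * ‖u - v‖)
    (hL : 0 ≤ L) (ha : 0 ≤ a) (hγ : 0 ≤ γ)
    (hupd : IsIterate F a γ u) (i : ℕ) :
    ‖F (u (i + 1)) - F (u i)‖ ≤ a * L * (γ * ‖F (u i)‖ + ‖F (u i) - F (u (i - 1))‖) := by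
  have hstep : u (i + 1) - u i = -(a • (γ • F (u i) + (F (u i) - F (u (i - 1))))) := by
    rw [hupd i]; module
  calc ‖F (u (i + 1)) - F (u i)‖ ≤ L * ‖u (i + 1) - u i‖ := hLip _ _
    _ ≤ L * (a * (γ * ‖F (u i)‖ + ‖F (u i) - F (u (i - 1))‖)) := by
        rw [hstep, norm_neg, norm_smul, Real.norm_eq_abs, abs_of_nonneg ha]
        gcongr
        refine (norm_add_le _ _).trans ?_
        rw [norm_smul, Real.norm_eq_abs, abs_of_nonneg hγ]
    _ = a * L * (γ * ‖F (u i)‖ + ‖F (u i) - F (u (i - 1))‖) := by ring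

theorem norm_shift_succ_sub_sq_le {ρ : ℝ} {ustar : E}
    (hweak : ∀ u, ⟪F u, u - ustar⟫ ≥ -(ρ / 2) * ‖F u‖ ^ 2) (ha : 0 ≤ a) (hγ : 0 ≤ γ)
    (hupd : IsIterate F a γ u) (i : ℕ) :
    ‖shift F a u (i + 1) - ustar‖ ^ 2
      ≤ ‖shift F a u i - ustar‖ ^ 2 + a * γ * (ρ - 2 * a + a * γ) * ‖F (u i)‖ ^ 2
        + 2 * a ^ 2 * γ * ‖F (u i)‖ * ‖F (u i) - F (u (i - 1))‖ := by
  have hinner : ⟪shift F a u i - ustar, F (u i)⟫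
      = ⟪F (u i), u i - ustar⟫ + a * ‖F (u i)‖ ^ 2 - a * ⟪F (u i), F (u i) - F (u (i - 1))⟫ := by
    rw [show shift F a u i - ustar = (u i - ustar) + a • F (u (i - 1)) by rw [shift]; abel,
      real_inner_comm]
    simp only [inner_add_right, real_inner_smul_right, inner_sub_right, real_inner_self_eq_norm_sq]
    ring
  have hexpand : ‖shift F a u (i + 1) - ustar‖ ^ 2
      = ‖shift F a u i - ustar‖ ^ 2 - 2 * (a * γ) * ⟪shift F a u i - ustar, F (u i)⟫
        + (a * γ) ^ 2 * ‖F (u i)‖ ^ 2 := by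
    rw [shift_succ hupd, sub_right_comm, norm_sub_sq_real, real_inner_smul_right, norm_smul,
      mul_pow, Real.norm_eq_abs, sq_abs]
    ring
  have hcs := real_inner_le_norm (F (u i)) (F (u i) - F (u (i - 1)))
  have hmin := hweak (u i)
  have haγ : 0 ≤ a * γ := mul_nonneg ha hγ
  rw [hexpand, hinner]
  nlinarith [mul_le_mul_of_nonneg_left hcs (mul_nonneg haγ ha),
    mul_le_mul_of_nonneg_left hmin haγ]

def energy (F : E → E) (a L : ℝ) (ustar : E) (u : ℕ → E) (i : ℕ) : ℝ :=
  L * ‖shift F a u i - ustar‖ ^ 2 + a * ‖F (u i) - F (u (i - 1))‖ ^ 2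

variable {L ρ lam : ℝ} {ustar : E}

theorem energy_succ_add_le (hLip : ∀ u v, ‖F u - F v‖ ≤ L * ‖u - v‖)
    (hweak : ∀ u, ⟪F u, u - ustar⟫ ≥ -(ρ / 2) * ‖F u‖ ^ 2)
    (hL : 0 < L) (ha : 0 < a) (hγ : 0 < γ) (hden : 0 < 2 - lam * γ + γ)
    (hstep : a * L * (2 - lam * γ + γ) ≤ 2 - lam * γ - γ)
    (hupd : IsIterate F a γ u) (i : ℕ) :
    energy F a L ustar u (i + 1) + L * (a * γ * (a * lam * γ - ρ)) * ‖F (u i)‖ ^ 2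
      ≤ energy F a L ustar u i := by
  have hshift := norm_shift_succ_sub_sq_le hweak ha.le hγ.le hupd i
  have hdiff := pow_le_pow_left₀ (norm_nonneg _)
    (norm_apply_succ_sub_le hLip hL.le ha.le hγ.le hupd i) 2
  have hquad := quadratic_le_of_step_size_condition (m := 2 - lam * γ - γ) (mul_pos ha hL) hγ
    (by linarith) (by linarith) ‖F (u i)‖ ‖F (u i) - F (u (i - 1))‖
  simp only [energy, Nat.add_sub_cancel]
  linear_combination L * hshift + a * hdiff + a * hquad

theorem mul_sum_norm_sq_le (hLip : ∀ u v, ‖F u - F v‖ ≤ L * ‖u - v‖)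
    (hweak : ∀ u, ⟪F u, u - ustar⟫ ≥ -(ρ / 2) * ‖F u‖ ^ 2)
    (hL : 0 < L) (ha : 0 < a) (hγ : 0 < γ) (hden : 0 < 2 - lam * γ + γ)
    (hstep : a * L * (2 - lam * γ + γ) ≤ 2 - lam * γ - γ)
    (hupd : IsIterate F a γ u) (n : ℕ) :
    a * γ * (a * lam * γ - ρ) * ∑ i ∈ Finset.range n, ‖F (u i)‖ ^ 2
      ≤ ‖u 0 + a • F (u 0) - ustar‖ ^ 2 := by
  have htelescope : L * (a * γ * (a * lam * γ - ρ) * ∑ i ∈ Finset.range n, ‖F (u i)‖ ^ 2)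
      ≤ energy F a L ustar u 0 - energy F a L ustar u n := by
    rw [← Finset.sum_range_sub', Finset.mul_sum, Finset.mul_sum]
    gcongr with i
    linarith [energy_succ_add_le hLip hweak hL ha hγ hden hstep hupd i]
  have hnonneg : 0 ≤ energy F a L ustar u n := by
    unfold energy; positivity
  have hzero : energy F a L ustar u 0 = L * ‖u 0 + a • F (u 0) - ustar‖ ^ 2 := by
    simp [energy, shift]
  exact le_of_mul_le_mul_left (by linarith) hL

end OGDAPlus

theorem ogda_plus_generalized_general (d : ℕ)
    (F : EuclideanSpace ℝ (Fin d) → EuclideanSpace ℝ (Fin d))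
    (L ρ a γ lam : ℝ) (ustar : EuclideanSpace ℝ (Fin d))
    (hL : 0 < L) (hLip : ∀ u v, ‖F u - F v‖ ≤ L * ‖u - v‖)
    (hweak : ∀ u, ⟪F u, u - ustar⟫ ≥ -(ρ / 2) * ‖F u‖ ^ 2)
    (hγ0 : 0 < γ)
    (hlam2 : lam ≤ 2 / γ)
    (ha : 0 < a) (haρ : ρ < a * lam * γ)
    (hstep : a * L ≤ (2 - lam * γ - γ) / (2 - lam * γ + γ))
    (u : ℕ → EuclideanSpace ℝ (Fin d))
    (hupd : ∀ k : ℕ, u (k + 1) = u k - a • ((1 + γ) • F (u k) - F (u (k - 1))))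
    (k : ℕ) :
    (1 / k) * ∑ i ∈ Finset.range k, ‖F (u i)‖ ^ 2
      ≤ (1 / (k * a * γ * (a * lam * γ - ρ))) * ‖u 0 + a • F (u 0) - ustar‖ ^ 2 := by
  have hden : 0 < 2 - lam * γ + γ := by
    have := (le_div_iff₀ hγ0).mp hlam2
    linarith
  have hsum := OGDAPlus.mul_sum_norm_sq_le hLip hweak hL ha hγ0 hden
    ((le_div_iff₀ hden).mp hstep) hupd k
  have hrate : 0 < a * γ * (a * lam * γ - ρ) := mul_pos (mul_pos ha hγ0) (by linarith)
  calc (1 / k) * ∑ i ∈ Finset.range k, ‖F (u i)‖ ^ 2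
      = 1 / (k * a * γ * (a * lam * γ - ρ))
          * (a * γ * (a * lam * γ - ρ) * ∑ i ∈ Finset.range k, ‖F (u i)‖ ^ 2) := by
        rw [show (k : ℝ) * a * γ * (a * lam * γ - ρ) = k * (a * γ * (a * lam * γ - ρ)) by ring,
          ← one_div_mul_one_div, mul_assoc, one_div (a * γ * _), inv_mul_cancel_left₀ hrate.ne']
    _ ≤ _ := by gcongr

theorem ogda_plus_generalized (d : ℕ)
    (F : EuclideanSpace ℝ (Fin d) → EuclideanSpace ℝ (Fin d))
    (L ρ a γ lam : ℝ) (ustar : EuclideanSpace ℝ (Fin d))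
    (hL : 0 < L) (hLip : ∀ u v, ‖F u - F v‖ ≤ L * ‖u - v‖)
    (hρ : 0 < ρ)
    (hweak : ∀ u, ⟪F u, u - ustar⟫ ≥ -(ρ / 2) * ‖F u‖ ^ 2)
    (hγ0 : 0 < γ) (hγ1 : γ ≤ 1)
    (hlam0 : 0 ≤ lam) (hlam2 : lam ≤ 2 / γ)
    (ha : 0 < a) (haρ : ρ < a * lam * γ)
    (hstep : a * L ≤ (2 - lam * γ - γ) / (2 - lam * γ + γ))
    (u : ℕ → EuclideanSpace ℝ (Fin d))
    (hupd : ∀ k : ℕ, u (k + 1) = u k - a • ((1 + γ) • F (u k) - F (u (k - 1))))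
    (k : ℕ) (hk : 1 ≤ k) :
    (1 / k) * ∑ i ∈ Finset.range k, ‖F (u i)‖ ^ 2
      ≤ (1 / (k * a * γ * (a * lam * γ - ρ))) * ‖u 0 + a • F (u 0) - ustar‖ ^ 2 :=
  ogda_plus_generalized_general d F L ρ a γ lam ustar hL hLip hweak hγ0 hlam2 ha haρ hstep u hupd k
end

section
/- Let F : ℝ^d → ℝ^d be monotone and L-Lipschitz with L > 0, and let u* ∈ ℝ^d satisfy F(u*) = 0. Let 0 < γ ≤ 1 and ε > 0 with ε < (2 − γ)/(2 + γ), and let (u_k)_{k≥0} be the OGDA+ iterates with step size a > 0 satisfying a·L = (2 − γ)/(2 + γ) − ε. Then for every k ≥ 1, (1/k)·Σ_{i=0}^{k−1} ‖F(u_i)‖² ≤ (2/(k·a²·γ²·ε))·‖u₀ + a·F(u₀) − u*‖². -/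
/-!
The shifted iterates `z_m = u_m + a F(u_{m-1}) - u*` satisfy `z_{m+1} = z_m - a γ F(u_m)`.
Expanding `‖z_{m+1}‖²` and using monotonicity against the zero `u*` leaves the error
`a² γ (‖F u_m - F u_{m-1}‖² - ‖F u_{m-1}‖² - (1 - γ) ‖F u_m‖²)`. The Lipschitz bound
`‖F u_{m+1} - F u_m‖ ≤ a L ‖(1 + γ) F u_m - F u_{m-1}‖` then makes the energy
`‖z_{m+1}‖² + a² (β ‖F u_m - F u_{m-1}‖² + γ (1 - γ) ‖F u_m‖²)`, with `β = 2 - γ - γ ε / 2`,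
drop by `a² γ² ε / 2 · ‖F u_m‖²` at every step provided `(γ + β)(1 + γ)(a L)² ≤ β`;
the step size `a L = (2 - γ)/(2 + γ) - ε` guarantees this. Telescoping gives the bound.
-/

open scoped RealInnerProductSpace

section InnerProductSpace

variable {E : Type*} [NormedAddCommGroup E] [InnerProductSpace ℝ E]

theorem norm_one_add_smul_sub_sq (γ : ℝ) (x y : E) :
    ‖(1 + γ) • x - y‖ ^ 2
      = (1 + γ) * ‖x - y‖ ^ 2 + γ * (1 + γ) * ‖x‖ ^ 2 - γ * ‖y‖ ^ 2 := by
  rw [norm_sub_sq_real, norm_sub_sq_real, norm_smul, real_inner_smul_left, mul_pow,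
    Real.norm_eq_abs, sq_abs]
  ring

theorem norm_add_smul_sub_smul_sq_le {w g g' : E} {a γ : ℝ} (haγ : 0 ≤ a * γ)
    (hw : 0 ≤ ⟪g, w⟫) :
    ‖w + a • g' - (a * γ) • g‖ ^ 2
      ≤ ‖w + a • g'‖ ^ 2 + a ^ 2 * γ * (‖g - g'‖ ^ 2 - ‖g'‖ ^ 2 - (1 - γ) * ‖g‖ ^ 2) := by
  have hcross : 2 * ⟪g, g'⟫ = ‖g‖ ^ 2 + ‖g'‖ ^ 2 - ‖g - g'‖ ^ 2 := by
    rw [norm_sub_sq_real]; ring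
  rw [norm_sub_sq_real, real_inner_smul_right, inner_add_left, real_inner_smul_left,
    real_inner_comm g w, real_inner_comm g g', norm_smul, mul_pow, Real.norm_eq_abs, sq_abs]
  linear_combination 2 * mul_nonneg haγ hw - a ^ 2 * γ * hcross

end InnerProductSpace

theorem ogda_step_size_condition {γ ε c : ℝ} (hγ0 : 0 ≤ γ) (hγ1 : γ ≤ 1) (hε : 0 ≤ ε)
    (hc : 0 ≤ c) (hstep : c = (2 - γ) / (2 + γ) - ε) :
    0 ≤ 2 - γ - γ * ε / 2 ∧
      (γ + (2 - γ - γ * ε / 2)) * ((1 + γ) * c ^ 2) ≤ 2 - γ - γ * ε / 2 := by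
  set c₀ := (2 - γ) / (2 + γ) with hc₀
  have hc₀2 : 2 * (1 + γ) * c₀ ^ 2 ≤ 2 - γ := by
    rw [hc₀, div_pow, ← mul_div_assoc, div_le_iff₀ (by positivity)]
    nlinarith [mul_nonneg hγ0 hγ0, mul_nonneg (mul_nonneg hγ0 hγ0) (sub_nonneg.2 hγ1)]
  have hc₀1 : γ / 4 ≤ (1 + γ) * c₀ := by
    rw [hc₀, ← mul_div_assoc, le_div_iff₀ (by positivity)]
    nlinarith
  have hc₀ : c₀ ≤ 1 := (div_le_one (by positivity)).2 (by linarith)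
  refine ⟨by nlinarith, ?_⟩
  have hcc₀ : c ≤ c₀ := by linarith
  calc (γ + (2 - γ - γ * ε / 2)) * ((1 + γ) * c ^ 2)
      ≤ 2 * (1 + γ) * (c₀ * c) := by
        nlinarith [mul_le_mul_of_nonneg_left hcc₀ (by positivity : 0 ≤ (1 + γ) * c),
          mul_nonneg (mul_nonneg hγ0 hε) (by positivity : 0 ≤ (1 + γ) * c ^ 2)]
    _ = 2 * (1 + γ) * c₀ ^ 2 - 2 * ((1 + γ) * c₀) * ε := by rw [hstep]; ring
    _ ≤ 2 - γ - γ * ε / 2 := by nlinarith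

section OGDAPlus

variable {E : Type*} [NormedAddCommGroup E] [InnerProductSpace ℝ E]

/-- The OGDA+ recursion; `k - 1` truncates at `0`, which encodes the start `u₋₁ = u₀`. -/
def IsOGDAPlus (F : E → E) (a γ : ℝ) (u : ℕ → E) : Prop :=
  ∀ k : ℕ, u (k + 1) = u k - a • ((1 + γ) • F (u k) - F (u (k - 1)))

def ogdaShift (F : E → E) (a : ℝ) (u : ℕ → E) (ustar : E) (m : ℕ) : E :=
  u m + a • F (u (m - 1)) - ustar

def ogdaEnergy (F : E → E) (a γ β : ℝ) (u : ℕ → E) (ustar : E) (m : ℕ) : ℝ :=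
  ‖ogdaShift F a u ustar (m + 1)‖ ^ 2
    + a ^ 2 * (β * ‖F (u m) - F (u (m - 1))‖ ^ 2 + γ * (1 - γ) * ‖F (u m)‖ ^ 2)

variable {F : E → E} {a γ : ℝ} {u : ℕ → E} {ustar : E}

namespace IsOGDAPlus

theorem ogdaShift_succ (hu : IsOGDAPlus F a γ u) (m : ℕ) :
    ogdaShift F a u ustar (m + 1) = ogdaShift F a u ustar m - (a * γ) • F (u m) := by
  rw [ogdaShift, ogdaShift, Nat.add_sub_cancel, hu m]
  module

theorem norm_ogdaShift_succ_sq_le (hu : IsOGDAPlus F a γ u)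
    (hstar : ∀ v, 0 ≤ ⟪F v, v - ustar⟫) (haγ : 0 ≤ a * γ) (m : ℕ) :
    ‖ogdaShift F a u ustar (m + 1)‖ ^ 2
      ≤ ‖ogdaShift F a u ustar m‖ ^ 2 + a ^ 2 * γ * (‖F (u m) - F (u (m - 1))‖ ^ 2
        - ‖F (u (m - 1))‖ ^ 2 - (1 - γ) * ‖F (u m)‖ ^ 2) := by
  have hshift : ogdaShift F a u ustar m = (u m - ustar) + a • F (u (m - 1)) := by
    rw [ogdaShift]; abel
  rw [hu.ogdaShift_succ, hshift]
  exact norm_add_smul_sub_smul_sq_le haγ (hstar (u m))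

theorem norm_sub_sq_le {L : ℝ} (hu : IsOGDAPlus F a γ u)
    (hLip : ∀ v w, ‖F v - F w‖ ≤ L * ‖v - w‖) (m : ℕ) :
    ‖F (u (m + 1)) - F (u m)‖ ^ 2
      ≤ (a * L) ^ 2 * ((1 + γ) * ‖F (u m) - F (u (m - 1))‖ ^ 2
        + γ * (1 + γ) * ‖F (u m)‖ ^ 2 - γ * ‖F (u (m - 1))‖ ^ 2) := by
  have hstep : u (m + 1) - u m = -(a • ((1 + γ) • F (u m) - F (u (m - 1)))) := by
    rw [hu m]; abel
  have hLip_m := hLip (u (m + 1)) (u m)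
  rw [hstep, norm_neg, norm_smul, Real.norm_eq_abs] at hLip_m
  calc ‖F (u (m + 1)) - F (u m)‖ ^ 2
      ≤ (L * (|a| * ‖(1 + γ) • F (u m) - F (u (m - 1))‖)) ^ 2 :=
        pow_le_pow_left₀ (norm_nonneg _) hLip_m 2
    _ = (a * L) ^ 2 * ‖(1 + γ) • F (u m) - F (u (m - 1))‖ ^ 2 := by
        rw [mul_pow, mul_pow, sq_abs]; ring
    _ = _ := by rw [norm_one_add_smul_sub_sq]

theorem ogdaEnergy_succ_le {L β : ℝ} (hu : IsOGDAPlus F a γ u)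
    (hstar : ∀ v, 0 ≤ ⟪F v, v - ustar⟫) (hLip : ∀ v w, ‖F v - F w‖ ≤ L * ‖v - w‖)
    (ha : 0 ≤ a) (hγ : 0 ≤ γ) (hβ : 0 ≤ β) (hcond : (γ + β) * ((1 + γ) * (a * L) ^ 2) ≤ β)
    (m : ℕ) :
    ogdaEnergy F a γ β u ustar (m + 1)
      ≤ ogdaEnergy F a γ β u ustar m - a ^ 2 * γ * (2 - γ - β) * ‖F (u m)‖ ^ 2 := by
  have hshift := hu.norm_ogdaShift_succ_sq_le hstar (mul_nonneg ha hγ) (m + 1)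
  have hlip := hu.norm_sub_sq_le hLip m
  rw [Nat.add_sub_cancel] at hshift
  simp only [ogdaEnergy, Nat.add_sub_cancel]
  set Dp := ‖F (u (m + 1)) - F (u m)‖ ^ 2
  set Dm := ‖F (u m) - F (u (m - 1))‖ ^ 2
  set N := ‖F (u m)‖ ^ 2
  have hDp : (γ + β) * Dp ≤ β * (Dm + γ * N) := by
    have hN : 0 ≤ N := sq_nonneg _
    have hDm : 0 ≤ Dm := sq_nonneg _
    have hM : 0 ≤ ‖F (u (m - 1))‖ ^ 2 := sq_nonneg _
    calc (γ + β) * Dp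
        ≤ (γ + β) * ((a * L) ^ 2 * ((1 + γ) * Dm + γ * (1 + γ) * N
          - γ * ‖F (u (m - 1))‖ ^ 2)) := mul_le_mul_of_nonneg_left hlip (by positivity)
      _ ≤ (γ + β) * ((1 + γ) * (a * L) ^ 2) * (Dm + γ * N) := by
          nlinarith [mul_nonneg (mul_nonneg (add_nonneg hγ hβ) (sq_nonneg (a * L)))
            (mul_nonneg hγ hM)]
      _ ≤ β * (Dm + γ * N) := mul_le_mul_of_nonneg_right hcond (by positivity)
  nlinarith [mul_le_mul_of_nonneg_left hDp (sq_nonneg a)]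

theorem ogdaEnergy_zero_le {β : ℝ} (hu : IsOGDAPlus F a γ u)
    (hstar : ∀ v, 0 ≤ ⟪F v, v - ustar⟫) (ha : 0 ≤ a) (hγ : 0 ≤ γ) :
    ogdaEnergy F a γ β u ustar 0 ≤ ‖ogdaShift F a u ustar 0‖ ^ 2 := by
  have h := hu.norm_ogdaShift_succ_sq_le hstar (mul_nonneg ha hγ) 0
  simp only [ogdaEnergy, zero_tsub, sub_self, norm_zero] at h ⊢
  nlinarith [mul_nonneg (mul_nonneg (sq_nonneg a) hγ) (sq_nonneg ‖F (u 0)‖)]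

end IsOGDAPlus

theorem ogdaEnergy_nonneg {β : ℝ} (hγ0 : 0 ≤ γ) (hγ1 : γ ≤ 1) (hβ : 0 ≤ β) (m : ℕ) :
    0 ≤ ogdaEnergy F a γ β u ustar m := by
  have : 0 ≤ γ * (1 - γ) := mul_nonneg hγ0 (sub_nonneg.2 hγ1)
  unfold ogdaEnergy
  positivity

theorem IsOGDAPlus.sum_norm_sq_le {L β : ℝ} (hu : IsOGDAPlus F a γ u)
    (hstar : ∀ v, 0 ≤ ⟪F v, v - ustar⟫) (hLip : ∀ v w, ‖F v - F w‖ ≤ L * ‖v - w‖)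
    (ha : 0 ≤ a) (hγ0 : 0 ≤ γ) (hγ1 : γ ≤ 1) (hβ : 0 ≤ β)
    (hcond : (γ + β) * ((1 + γ) * (a * L) ^ 2) ≤ β) (k : ℕ) :
    a ^ 2 * γ * (2 - γ - β) * ∑ m ∈ Finset.range k, ‖F (u m)‖ ^ 2
      ≤ ‖ogdaShift F a u ustar 0‖ ^ 2 := by
  set V := ogdaEnergy F a γ β u ustar
  calc a ^ 2 * γ * (2 - γ - β) * ∑ m ∈ Finset.range k, ‖F (u m)‖ ^ 2
      ≤ ∑ m ∈ Finset.range k, (V m - V (m + 1)) := by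
        rw [Finset.mul_sum]
        exact Finset.sum_le_sum fun m _ ↦ by
          linarith [hu.ogdaEnergy_succ_le hstar hLip ha hγ0 hβ hcond m]
    _ = V 0 - V k := Finset.sum_range_sub' V k
    _ ≤ ‖ogdaShift F a u ustar 0‖ ^ 2 := by
        linarith [hu.ogdaEnergy_zero_le (β := β) hstar ha hγ0,
          (ogdaEnergy_nonneg hγ0 hγ1 hβ k : 0 ≤ V k)]

end OGDAPlus

theorem ogda_plus_monotone_general (d : ℕ)
    (F : EuclideanSpace ℝ (Fin d) → EuclideanSpace ℝ (Fin d))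
    (L a γ ε : ℝ) (ustar : EuclideanSpace ℝ (Fin d))
    (hL : 0 < L) (hLip : ∀ u v, ‖F u - F v‖ ≤ L * ‖u - v‖)
    (hMono : ∀ u v, ⟪F u - F v, u - v⟫ ≥ 0)
    (hsol : F ustar = 0)
    (hγ0 : 0 < γ) (hγ1 : γ ≤ 1)
    (hε0 : 0 < ε)
    (ha : 0 < a) (hstep : a * L = (2 - γ) / (2 + γ) - ε)
    (u : ℕ → EuclideanSpace ℝ (Fin d))
    (hupd : ∀ k : ℕ, u (k + 1) = u k - a • ((1 + γ) • F (u k) - F (u (k - 1))))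
    (k : ℕ) (hk : 1 ≤ k) :
    (1 / k) * ∑ i ∈ Finset.range k, ‖F (u i)‖ ^ 2
      ≤ (2 / (k * a ^ 2 * γ ^ 2 * ε)) * ‖u 0 + a • F (u 0) - ustar‖ ^ 2 := by
  have hstar : ∀ v, 0 ≤ ⟪F v, v - ustar⟫ := fun v ↦ by simpa [hsol] using hMono v ustar
  obtain ⟨hβ, hcond⟩ := ogda_step_size_condition hγ0.le hγ1 hε0.le (mul_pos ha hL).le hstep
  have hsum := IsOGDAPlus.sum_norm_sq_le hupd hstar hLip ha.le hγ0.le hγ1 hβ hcond k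
  have hshift0 : ogdaShift F a u ustar 0 = u 0 + a • F (u 0) - ustar := rfl
  rw [hshift0, show 2 - γ - (2 - γ - γ * ε / 2) = γ * ε / 2 by ring] at hsum
  have hk0 : (0 : ℝ) < k := by exact_mod_cast hk
  rw [div_mul_eq_mul_div, div_mul_eq_mul_div, div_le_div_iff₀ hk0 (by positivity)]
  linear_combination (2 * (k : ℝ)) * hsum

theorem ogda_plus_monotone (d : ℕ)
    (F : EuclideanSpace ℝ (Fin d) → EuclideanSpace ℝ (Fin d))
    (L a γ ε : ℝ) (ustar : EuclideanSpace ℝ (Fin d))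
    (hL : 0 < L) (hLip : ∀ u v, ‖F u - F v‖ ≤ L * ‖u - v‖)
    (hMono : ∀ u v, ⟪F u - F v, u - v⟫ ≥ 0)
    (hsol : F ustar = 0)
    (hγ0 : 0 < γ) (hγ1 : γ ≤ 1)
    (hε0 : 0 < ε) (hε1 : ε < (2 - γ) / (2 + γ))
    (ha : 0 < a) (hstep : a * L = (2 - γ) / (2 + γ) - ε)
    (u : ℕ → EuclideanSpace ℝ (Fin d))
    (hupd : ∀ k : ℕ, u (k + 1) = u k - a • ((1 + γ) • F (u k) - F (u (k - 1))))
    (k : ℕ) (hk : 1 ≤ k) :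
    (1 / k) * ∑ i ∈ Finset.range k, ‖F (u i)‖ ^ 2
      ≤ (2 / (k * a ^ 2 * γ ^ 2 * ε)) * ‖u 0 + a • F (u 0) - ustar‖ ^ 2 :=
  ogda_plus_monotone_general d F L a γ ε ustar hL hLip hMono hsol hγ0 hγ1 hε0 ha hstep u hupd k hk
end

section
/- Let F : ℝ^d → ℝ^d have a weak Minty solution u* with parameter ρ > 0, and let (u_k)_{k≥0} be the OGDA+ iterates with step size a > 0 and parameter 0 < γ ≤ 1. Then, writing g_k = F(u_k), for every k ≥ 0: ‖u_{k+1} + a·g_k − u*‖² ≤ ‖u_k + a·g_{k−1} − u*‖² + a·γ·ρ·‖g_k‖² + (4a/γ)·⟨g_k − g_{k−1}, u_k − u_{k+1}⟩ − (2/γ − 1)·‖u_{k+1} − u_k‖² − a²·(1 + 2/γ)·‖g_k − g_{k−1}‖². -/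
/-!
Writing `w = v - a((1 + γ)g - g')` for one OGDA+ step from `v`, the quantity
`‖w + a g - u*‖²` equals `‖v + a g' - u*‖²` plus the inner-product and norm terms of the
bound, minus `2aγ⟨g, v - u*⟩`; this is a polynomial identity in `a`, `γ`, `1/γ` and the
inner products of `v, g, g', u*`. The weak Minty condition at `v` bounds the last term by
`aγρ‖g‖²`.
-/

open scoped RealInnerProductSpace

section

variable {E : Type*} [NormedAddCommGroup E] [InnerProductSpace ℝ E]

theorem ogdaPlus_norm_sq_eq {a γ : ℝ} (hγ : γ ≠ 0) {v w g g' ustar : E}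
    (hw : w = v - a • ((1 + γ) • g - g')) :
    ‖w + a • g - ustar‖ ^ 2
      = ‖v + a • g' - ustar‖ ^ 2 + (4 * a / γ) * ⟪g - g', v - w⟫
        - (2 / γ - 1) * ‖w - v‖ ^ 2 - a ^ 2 * (1 + 2 / γ) * ‖g - g'‖ ^ 2
        - 2 * a * γ * ⟪g, v - ustar⟫ := by
  subst hw
  simp only [← real_inner_self_eq_norm_sq, inner_sub_left, inner_sub_right,
    inner_add_left, inner_add_right, real_inner_smul_left, real_inner_smul_right,
    real_inner_comm g v, real_inner_comm g' v, real_inner_comm ustar v,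
    real_inner_comm g' g, real_inner_comm ustar g, real_inner_comm ustar g']
  field_simp
  ring

theorem neg_two_mul_inner_le_of_weakMinty {c ρ : ℝ} (hc : 0 ≤ c) {g v ustar : E}
    (hminty : ⟪g, v - ustar⟫ ≥ -(ρ / 2) * ‖g‖ ^ 2) :
    -(2 * c * ⟪g, v - ustar⟫) ≤ c * ρ * ‖g‖ ^ 2 := by
  nlinarith [mul_le_mul_of_nonneg_left hminty hc]

end

theorem ogda_plus_descent_lemma_general (d : ℕ)
    (F : EuclideanSpace ℝ (Fin d) → EuclideanSpace ℝ (Fin d))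
    (ρ a γ : ℝ) (ustar : EuclideanSpace ℝ (Fin d))
    (hweak : ∀ u, ⟪F u, u - ustar⟫ ≥ -(ρ / 2) * ‖F u‖ ^ 2)
    (ha : 0 < a) (hγ0 : 0 < γ)
    (u : ℕ → EuclideanSpace ℝ (Fin d))
    (hupd : ∀ k : ℕ, u (k + 1) = u k - a • ((1 + γ) • F (u k) - F (u (k - 1))))
    (k : ℕ) :
    ‖u (k + 1) + a • F (u k) - ustar‖ ^ 2
      ≤ ‖u k + a • F (u (k - 1)) - ustar‖ ^ 2 + a * γ * ρ * ‖F (u k)‖ ^ 2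
        + (4 * a / γ) * ⟪F (u k) - F (u (k - 1)), u k - u (k + 1)⟫
        - (2 / γ - 1) * ‖u (k + 1) - u k‖ ^ 2
        - a ^ 2 * (1 + 2 / γ) * ‖F (u k) - F (u (k - 1))‖ ^ 2 := by
  have hstep := ogdaPlus_norm_sq_eq (ustar := ustar) hγ0.ne' (hupd k)
  have hminty := neg_two_mul_inner_le_of_weakMinty (mul_pos ha hγ0).le (hweak (u k))
  rw [hstep]
  linarith

theorem ogda_plus_descent_lemma (d : ℕ)
    (F : EuclideanSpace ℝ (Fin d) → EuclideanSpace ℝ (Fin d))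
    (ρ a γ : ℝ) (ustar : EuclideanSpace ℝ (Fin d))
    (hρ : 0 < ρ)
    (hweak : ∀ u, ⟪F u, u - ustar⟫ ≥ -(ρ / 2) * ‖F u‖ ^ 2)
    (ha : 0 < a) (hγ0 : 0 < γ) (hγ1 : γ ≤ 1)
    (u : ℕ → EuclideanSpace ℝ (Fin d))
    (hupd : ∀ k : ℕ, u (k + 1) = u k - a • ((1 + γ) • F (u k) - F (u (k - 1))))
    (k : ℕ) :
    ‖u (k + 1) + a • F (u k) - ustar‖ ^ 2
      ≤ ‖u k + a • F (u (k - 1)) - ustar‖ ^ 2 + a * γ * ρ * ‖F (u k)‖ ^ 2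
        + (4 * a / γ) * ⟪F (u k) - F (u (k - 1)), u k - u (k + 1)⟫
        - (2 / γ - 1) * ‖u (k + 1) - u k‖ ^ 2
        - a ^ 2 * (1 + 2 / γ) * ‖F (u k) - F (u (k - 1))‖ ^ 2 :=
  ogda_plus_descent_lemma_general d F ρ a γ ustar hweak ha hγ0 u hupd k
end

section
/- Let F : ℝ^d → ℝ^d be L-Lipschitz with L > 0 and have a weak Minty solution u* with parameter ρ > 0. Let (u_k)_{k≥0} be the OGDA+ iterates with step size a > 0 and parameter 0 < γ ≤ 1, let 0 ≤ λ ≤ 2/γ, and assume a·L·(2 + γ − λ·γ) ≤ 2 − λ·γ. Then for every k ≥ 0: ‖u_{k+1} + a·F(u_k) − u*‖² + a·γ·(a·γ·λ − ρ)·‖F(u_k)‖² ≤ ‖u_k + a·F(u_{k−1}) − u*‖² + (a·L·(2/γ − λ) − a²·L²·(1 + 2/γ − λ))·‖u_k − u_{k−1}‖² − (2/γ − 1 − λ − a·L·(2/γ − λ))·‖u_{k+1} − u_k‖². -/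
/-!
Write `z_k = u_k + a F(u_{k-1}) - u*`, `P = aγ F(u_k)` and `R = a (F(u_k) - F(u_{k-1}))`.
One OGDA+ step reads `z_{k+1} = z_k - P` and `u_{k+1} - u_k = -(P + R)`. Expanding `‖z_{k+1}‖²`,
the weak Minty inequality at `u_k` absorbs the term `⟨F(u_k), u_k - u*⟩`, and what is left is a
quadratic inequality in `P` and `R`, which holds because Lipschitz continuity gives
`‖R‖ ≤ aL ‖u_k - u_{k-1}‖` and the step-size condition reads `aL (1 + s) ≤ s` for `s = 2/γ - λ`.
-/

open scoped RealInnerProductSpace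

section

variable {E : Type*} [NormedAddCommGroup E] [InnerProductSpace ℝ E]

/- Multiplied by `t`, the difference of the two sides is
`s ‖t P - (1 - t) R‖² + (s - t (1 + s)) ((t D)² - ‖R‖²)`. -/
theorem mul_norm_add_sq_le_of_norm_le (P R : E) {s t D : ℝ} (hs : 0 ≤ s) (ht : 0 < t)
    (hts : t * (1 + s) ≤ s) (hR : ‖R‖ ≤ t * D) :
    s * (1 - t) * ‖P + R‖ ^ 2 ≤ s * ‖P‖ ^ 2 + ‖R‖ ^ 2 + (t * s - t ^ 2 * (1 + s)) * D ^ 2 := by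
  have hR2 : ‖R‖ ^ 2 ≤ (t * D) ^ 2 := pow_le_pow_left₀ (norm_nonneg R) hR 2
  have hcomb : 0 ≤ ‖t • P - (1 - t) • R‖ ^ 2 := sq_nonneg _
  rw [norm_sub_sq_real, norm_smul, norm_smul, mul_pow, mul_pow, Real.norm_eq_abs,
    Real.norm_eq_abs, sq_abs, sq_abs, real_inner_smul_left, real_inner_smul_right] at hcomb
  rw [norm_add_sq_real]
  refine le_of_mul_le_mul_left ?_ ht
  linarith [mul_nonneg hs hcomb, mul_nonneg (sub_nonneg.2 hts) (sub_nonneg.2 hR2)]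

theorem ogdaPlus_step_norm_sq_shifted {x x' g g' w : E} {a γ : ℝ}
    (hx' : x' = x - a • ((1 + γ) • g - g')) :
    ‖x' + a • g - w‖ ^ 2 = ‖x + a • g' - w‖ ^ 2 - 2 * (a * γ) * ⟪g, x - w⟫
      - 2 * a ^ 2 * γ * ‖g‖ ^ 2 + ‖x' - x‖ ^ 2 - a ^ 2 * ‖g - g'‖ ^ 2 := by
  subst hx'
  simp only [← real_inner_self_eq_norm_sq, inner_add_left, inner_add_right, inner_sub_left,
    inner_sub_right, real_inner_smul_left, real_inner_smul_right, real_inner_comm g]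
  ring

end

theorem ogda_plus_one_step_estimate_general (d : ℕ)
    (F : EuclideanSpace ℝ (Fin d) → EuclideanSpace ℝ (Fin d))
    (L ρ a γ lam : ℝ) (ustar : EuclideanSpace ℝ (Fin d))
    (hL : 0 < L) (hLip : ∀ u v, ‖F u - F v‖ ≤ L * ‖u - v‖)
    (hweak : ∀ u, ⟪F u, u - ustar⟫ ≥ -(ρ / 2) * ‖F u‖ ^ 2)
    (ha : 0 < a) (hγ0 : 0 < γ)
    (hlam2 : lam ≤ 2 / γ)
    (hstep : a * L * (2 + γ - lam * γ) ≤ 2 - lam * γ)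
    (u : ℕ → EuclideanSpace ℝ (Fin d))
    (hupd : ∀ k : ℕ, u (k + 1) = u k - a • ((1 + γ) • F (u k) - F (u (k - 1))))
    (k : ℕ) :
    ‖u (k + 1) + a • F (u k) - ustar‖ ^ 2
        + a * γ * (a * γ * lam - ρ) * ‖F (u k)‖ ^ 2
      ≤ ‖u k + a • F (u (k - 1)) - ustar‖ ^ 2
        + (a * L * (2 / γ - lam) - a ^ 2 * L ^ 2 * (1 + 2 / γ - lam)) * ‖u k - u (k - 1)‖ ^ 2
        - (2 / γ - 1 - lam - a * L * (2 / γ - lam)) * ‖u (k + 1) - u k‖ ^ 2 := by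
  set g := F (u k)
  set g' := F (u (k - 1))
  have hdiff : u (k + 1) - u k = -((a * γ) • g + a • (g - g')) := by rw [hupd k]; module
  have hγ_mul : γ * (2 / γ) = 2 := by field_simp
  have hts : a * L * (1 + (2 / γ - lam)) ≤ 2 / γ - lam := by
    rw [← mul_le_mul_iff_of_pos_left hγ0]
    linear_combination hstep + (a * L - 1) * hγ_mul
  have hR : ‖a • (g - g')‖ ≤ a * L * ‖u k - u (k - 1)‖ := by
    rw [norm_smul, Real.norm_of_nonneg ha.le, mul_assoc]
    exact mul_le_mul_of_nonneg_left (hLip _ _) ha.le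
  have hquad := mul_norm_add_sq_le_of_norm_le ((a * γ) • g) (a • (g - g'))
    (sub_nonneg.2 hlam2) (mul_pos ha hL) hts hR
  rw [← norm_neg, ← hdiff, norm_smul, norm_smul, Real.norm_of_nonneg ha.le,
    Real.norm_of_nonneg (mul_pos ha hγ0).le] at hquad
  have hminty := mul_le_mul_of_nonneg_left (hweak (u k)) (mul_pos ha hγ0).le
  rw [ogdaPlus_step_norm_sq_shifted (hupd k)]
  linear_combination hquad + 2 * hminty + a ^ 2 * γ * ‖g‖ ^ 2 * hγ_mul

theorem ogda_plus_one_step_estimate (d : ℕ)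
    (F : EuclideanSpace ℝ (Fin d) → EuclideanSpace ℝ (Fin d))
    (L ρ a γ lam : ℝ) (ustar : EuclideanSpace ℝ (Fin d))
    (hL : 0 < L) (hLip : ∀ u v, ‖F u - F v‖ ≤ L * ‖u - v‖)
    (hρ : 0 < ρ)
    (hweak : ∀ u, ⟪F u, u - ustar⟫ ≥ -(ρ / 2) * ‖F u‖ ^ 2)
    (ha : 0 < a) (hγ0 : 0 < γ) (hγ1 : γ ≤ 1)
    (hlam0 : 0 ≤ lam) (hlam2 : lam ≤ 2 / γ)
    (hstep : a * L * (2 + γ - lam * γ) ≤ 2 - lam * γ)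
    (u : ℕ → EuclideanSpace ℝ (Fin d))
    (hupd : ∀ k : ℕ, u (k + 1) = u k - a • ((1 + γ) • F (u k) - F (u (k - 1))))
    (k : ℕ) :
    ‖u (k + 1) + a • F (u k) - ustar‖ ^ 2
        + a * γ * (a * γ * lam - ρ) * ‖F (u k)‖ ^ 2
      ≤ ‖u k + a • F (u (k - 1)) - ustar‖ ^ 2
        + (a * L * (2 / γ - lam) - a ^ 2 * L ^ 2 * (1 + 2 / γ - lam)) * ‖u k - u (k - 1)‖ ^ 2
        - (2 / γ - 1 - lam - a * L * (2 / γ - lam)) * ‖u (k + 1) - u k‖ ^ 2 :=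
  ogda_plus_one_step_estimate_general d F L ρ a γ lam ustar hL hLip hweak ha hγ0 hlam2 hstep u hupd
    k
end

section
/- Let F : ℝ^d → ℝ^d have a weak Minty solution u* with parameter ρ > 0, and let (u_k, ū_k, a_k) be generated by the adaptive EG+ method with parameters τ ∈ (0,1), 0 < γ ≤ 1, starting point ū₀ and initial step size a₀ > 0. Then for every k ≥ 0: (1/γ)·‖ū_{k+1} − u*‖² ≤ (1/γ)·‖ū_k − u*‖² − a_k·(a_k·γ·(1 − γ) − ρ)·‖F(u_k)‖² − (1 − τ·a_k/a_{k+1})·(‖u_k − ū_k‖² + ‖u_k − ū_{k+1}‖²). -/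
/-!
Write `p = u_k - ū_k = -a_k F(ū_k)` and `q = u_k - ū_{k+1}`. Expanding the square of
`ū_{k+1} - u* = (ū_k - u*) - a_k γ F(u_k)` leaves, besides the claimed terms, the Minty term
`-2 a_k ⟨F(u_k), u_k - u*⟩ ≤ a_k ρ ‖F(u_k)‖²` and the cross term `2 a_k ⟨F(u_k) - F(ū_k), q⟩`.
The step-size rule gives the local Lipschitz bound `a_k ‖F(u_k) - F(ū_k)‖ ≤ (τ a_k / a_{k+1}) ‖p‖`,
so Cauchy–Schwarz and `2‖p‖‖q‖ ≤ ‖p‖² + ‖q‖²` absorb the cross term into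
`(τ a_k / a_{k+1}) (‖p‖² + ‖q‖²)`.
-/

open scoped RealInnerProductSpace

section

variable {E : Type*} [NormedAddCommGroup E] [InnerProductSpace ℝ E]

theorem two_inner_le_mul_add_sq {v p q : E} {t : ℝ} (ht : 0 ≤ t) (hv : ‖v‖ ≤ t * ‖p‖) :
    2 * ⟪v, q⟫ ≤ t * (‖p‖ ^ 2 + ‖q‖ ^ 2) :=
  calc 2 * ⟪v, q⟫ ≤ 2 * (‖v‖ * ‖q‖) := by gcongr; exact real_inner_le_norm v q
    _ ≤ 2 * (t * ‖p‖ * ‖q‖) := by gcongr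
    _ ≤ t * (‖p‖ ^ 2 + ‖q‖ ^ 2) := by
      nlinarith [mul_le_mul_of_nonneg_left (two_mul_le_add_sq ‖p‖ ‖q‖) ht]

theorem eg_plus_norm_sq_eq (x g h : E) {a γ : ℝ} (hγ : γ ≠ 0) :
    (1 / γ) * ‖x - (a * γ) • g‖ ^ 2
      = (1 / γ) * ‖x‖ ^ 2 - 2 * a * ⟪g, x - a • h⟫ - a * (a * γ * (1 - γ)) * ‖g‖ ^ 2
        - (‖a • h‖ ^ 2 + ‖(a * γ) • g - a • h‖ ^ 2) + 2 * ⟪a • (g - h), (a * γ) • g - a • h⟫ := by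
  simp only [norm_sub_sq_real, inner_sub_left, inner_sub_right, real_inner_smul_left,
    real_inner_smul_right, norm_smul, mul_pow, Real.norm_eq_abs, sq_abs,
    real_inner_self_eq_norm_sq, real_inner_comm h g, real_inner_comm x g]
  field_simp
  ring

theorem eg_plus_step_descent (F : E → E) {ustar ubar u ubar' : E} {ρ τ γ a a' : ℝ}
    (hγ : γ ≠ 0) (ha : 0 ≤ a) (ha' : 0 < a') (hτ : 0 ≤ τ)
    (hminty : ⟪F u, u - ustar⟫ ≥ -(ρ / 2) * ‖F u‖ ^ 2)
    (hlip : a' * ‖F u - F ubar‖ ≤ τ * ‖u - ubar‖)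
    (hu : u = ubar - a • F ubar) (hubar' : ubar' = ubar - (a * γ) • F u) :
    (1 / γ) * ‖ubar' - ustar‖ ^ 2
      ≤ (1 / γ) * ‖ubar - ustar‖ ^ 2 - a * (a * γ * (1 - γ) - ρ) * ‖F u‖ ^ 2
        - (1 - τ * a / a') * (‖u - ubar‖ ^ 2 + ‖u - ubar'‖ ^ 2) := by
  have hq : u - ubar' = (a * γ) • F u - a • F ubar := by
    rw [hubar']; nth_rewrite 1 [hu]; abel
  have hx : ubar' - ustar = (ubar - ustar) - (a * γ) • F u := by rw [hubar']; abel
  have hx' : u - ustar = (ubar - ustar) - a • F ubar := by rw [hu]; abel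
  have hlip' : ‖a • (F u - F ubar)‖ ≤ τ * a / a' * ‖u - ubar‖ := by
    rw [norm_smul, Real.norm_of_nonneg ha, div_mul_eq_mul_div, le_div_iff₀ ha']
    linarith [mul_le_mul_of_nonneg_left hlip ha]
  have hcross := two_inner_le_mul_add_sq (q := u - ubar') (by positivity) hlip'
  have hminty' := mul_le_mul_of_nonneg_left (ge_iff_le.mp hminty) ha
  have hp_norm : ‖a • F ubar‖ = ‖u - ubar‖ := by rw [hu, sub_sub_cancel_left, norm_neg]
  rw [hx, eg_plus_norm_sq_eq _ _ (F ubar) hγ, ← hx', hp_norm, ← hq]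
  linarith

end

section

variable {E : Type*} [NormedAddCommGroup E] (F : E → E) (u ubar : ℕ → E) (a : ℕ → ℝ) {τ : ℝ}

theorem adaptive_step_pos (hτ : 0 < τ) (ha0 : 0 < a 0)
    (hstep_eq : ∀ k : ℕ, F (u k) = F (ubar k) → a (k + 1) = a k)
    (hstep_ne : ∀ k : ℕ, F (u k) ≠ F (ubar k) →
      a (k + 1) = min (a k) (τ * ‖u k - ubar k‖ / ‖F (u k) - F (ubar k)‖)) :
    ∀ k, 0 < a k := by
  intro k
  induction k with
  | zero => exact ha0
  | succ k ih =>
    by_cases hF : F (u k) = F (ubar k)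
    · rwa [hstep_eq k hF]
    · have hu : u k ≠ ubar k := fun h => hF (congrArg F h)
      rw [hstep_ne k hF]
      have : 0 < ‖F (u k) - F (ubar k)‖ := norm_pos_iff.mpr (sub_ne_zero.mpr hF)
      have : 0 < ‖u k - ubar k‖ := norm_pos_iff.mpr (sub_ne_zero.mpr hu)
      exact lt_min ih (by positivity)

theorem adaptive_step_mul_norm_sub_le (hτ : 0 ≤ τ)
    (hstep_ne : ∀ k : ℕ, F (u k) ≠ F (ubar k) →
      a (k + 1) = min (a k) (τ * ‖u k - ubar k‖ / ‖F (u k) - F (ubar k)‖)) (k : ℕ) :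
    a (k + 1) * ‖F (u k) - F (ubar k)‖ ≤ τ * ‖u k - ubar k‖ := by
  by_cases hF : F (u k) = F (ubar k)
  · rw [hF, sub_self, norm_zero, mul_zero]
    positivity
  · have hpos : 0 < ‖F (u k) - F (ubar k)‖ := norm_pos_iff.mpr (sub_ne_zero.mpr hF)
    rw [← le_div_iff₀ hpos, hstep_ne k hF]
    exact min_le_right _ _

end

theorem adaptive_eg_plus_descent_lemma_general (d : ℕ)
    (F : EuclideanSpace ℝ (Fin d) → EuclideanSpace ℝ (Fin d))
    (ρ τ γ : ℝ) (ustar : EuclideanSpace ℝ (Fin d))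
    (hweak : ∀ u, ⟪F u, u - ustar⟫ ≥ -(ρ / 2) * ‖F u‖ ^ 2)
    (hτ0 : 0 < τ) (hγ0 : 0 < γ)
    (u ubar : ℕ → EuclideanSpace ℝ (Fin d)) (a : ℕ → ℝ)
    (ha0 : 0 < a 0)
    (hstep_eq : ∀ k : ℕ, F (u k) = F (ubar k) → a (k + 1) = a k)
    (hstep_ne : ∀ k : ℕ, F (u k) ≠ F (ubar k) →
      a (k + 1) = min (a k) (τ * ‖u k - ubar k‖ / ‖F (u k) - F (ubar k)‖))
    (hu : ∀ k : ℕ, u k = ubar k - a k • F (ubar k))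
    (hubar : ∀ k : ℕ, ubar (k + 1) = ubar k - (a k * γ) • F (u k)) :
    ∀ k : ℕ,
      (1 / γ) * ‖ubar (k + 1) - ustar‖ ^ 2
        ≤ (1 / γ) * ‖ubar k - ustar‖ ^ 2
          - a k * (a k * γ * (1 - γ) - ρ) * ‖F (u k)‖ ^ 2
          - (1 - τ * a k / a (k + 1)) * (‖u k - ubar k‖ ^ 2 + ‖u k - ubar (k + 1)‖ ^ 2) := by
  have ha := adaptive_step_pos F u ubar a hτ0 ha0 hstep_eq hstep_ne
  intro k
  exact eg_plus_step_descent F hγ0.ne' (ha k).le (ha (k + 1)) hτ0.le (hweak (u k))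
    (adaptive_step_mul_norm_sub_le F u ubar a hτ0.le hstep_ne k) (hu k) (hubar k)

theorem adaptive_eg_plus_descent_lemma (d : ℕ)
    (F : EuclideanSpace ℝ (Fin d) → EuclideanSpace ℝ (Fin d))
    (ρ τ γ : ℝ) (ustar : EuclideanSpace ℝ (Fin d))
    (hρ : 0 < ρ)
    (hweak : ∀ u, ⟪F u, u - ustar⟫ ≥ -(ρ / 2) * ‖F u‖ ^ 2)
    (hτ0 : 0 < τ) (hτ1 : τ < 1) (hγ0 : 0 < γ) (hγ1 : γ ≤ 1)
    (u ubar : ℕ → EuclideanSpace ℝ (Fin d)) (a : ℕ → ℝ)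
    (ha0 : 0 < a 0)
    (hstep_eq : ∀ k : ℕ, F (u k) = F (ubar k) → a (k + 1) = a k)
    (hstep_ne : ∀ k : ℕ, F (u k) ≠ F (ubar k) →
      a (k + 1) = min (a k) (τ * ‖u k - ubar k‖ / ‖F (u k) - F (ubar k)‖))
    (hu : ∀ k : ℕ, u k = ubar k - a k • F (ubar k))
    (hubar : ∀ k : ℕ, ubar (k + 1) = ubar k - (a k * γ) • F (u k)) :
    ∀ k : ℕ,
      (1 / γ) * ‖ubar (k + 1) - ustar‖ ^ 2
        ≤ (1 / γ) * ‖ubar k - ustar‖ ^ 2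
          - a k * (a k * γ * (1 - γ) - ρ) * ‖F (u k)‖ ^ 2
          - (1 - τ * a k / a (k + 1)) * (‖u k - ubar k‖ ^ 2 + ‖u k - ubar (k + 1)‖ ^ 2) :=
  adaptive_eg_plus_descent_lemma_general d F ρ τ γ ustar hweak hτ0 hγ0 u ubar a ha0 hstep_eq
    hstep_ne hu hubar
end

section
/- Let F : ℝ^d → ℝ^d be L-Lipschitz with L > 0, and let (a_k)_{k≥0} be the step sizes generated by the adaptive EG+ method with parameters τ ∈ (0,1), 0 < γ ≤ 1, starting point ū₀ and initial step size a₀ > 0. Then the sequence (a_k) is nonincreasing and a_k ≥ min{a₀, τ/L} > 0 for all k ≥ 0. -/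
/-! Lipschitz continuity bounds every candidate step `τ‖u - ū‖ / ‖F u - F ū‖` from below by
`τ / L`, so an update `a_{k+1} = min a_k (…)` never falls below `min a_k (τ / L)`; iterating,
no step size falls below `min a₀ (τ / L)`. -/

theorem div_le_mul_norm_sub_div_norm_sub_of_lipschitz {E E' : Type*} [SeminormedAddCommGroup E]
    [NormedAddCommGroup E'] {f : E → E'} {L τ : ℝ} {x y : E} (hL : 0 < L) (hτ : 0 ≤ τ)
    (hf : ‖f x - f y‖ ≤ L * ‖x - y‖) (hne : f x ≠ f y) :
    τ / L ≤ τ * ‖x - y‖ / ‖f x - f y‖ := by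
  have hpos : 0 < ‖f x - f y‖ := norm_pos_iff.mpr (sub_ne_zero.mpr hne)
  rw [div_le_div_iff₀ hL hpos]
  calc τ * ‖f x - f y‖ ≤ τ * (L * ‖x - y‖) := mul_le_mul_of_nonneg_left hf hτ
    _ = τ * ‖x - y‖ * L := by ring

theorem min_le_of_forall_min_le_succ {α : Type*} [LinearOrder α] {a : ℕ → α} {c : α}
    (h : ∀ k, min (a k) c ≤ a (k + 1)) (k : ℕ) : min (a 0) c ≤ a k := by
  induction k with
  | zero => exact min_le_left _ _
  | succ k ih => exact (le_min ih (min_le_right _ _)).trans (h k)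

theorem adaptive_eg_plus_step_size_bounds_general (d : ℕ)
    (F : EuclideanSpace ℝ (Fin d) → EuclideanSpace ℝ (Fin d))
    (L τ : ℝ)
    (hL : 0 < L) (hLip : ∀ u v, ‖F u - F v‖ ≤ L * ‖u - v‖)
    (hτ0 : 0 < τ)
    (u ubar : ℕ → EuclideanSpace ℝ (Fin d)) (a : ℕ → ℝ)
    (ha0 : 0 < a 0)
    (hstep_eq : ∀ k : ℕ, F (u k) = F (ubar k) → a (k + 1) = a k)
    (hstep_ne : ∀ k : ℕ, F (u k) ≠ F (ubar k) →
      a (k + 1) = min (a k) (τ * ‖u k - ubar k‖ / ‖F (u k) - F (ubar k)‖)) :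
    (∀ k : ℕ, a (k + 1) ≤ a k) ∧
      (∀ k : ℕ, min (a 0) (τ / L) ≤ a k) ∧ 0 < min (a 0) (τ / L) := by
  have hstep : ∀ k, a (k + 1) ≤ a k ∧ min (a k) (τ / L) ≤ a (k + 1) := by
    intro k
    by_cases h : F (u k) = F (ubar k)
    · rw [hstep_eq k h]
      exact ⟨le_rfl, min_le_left _ _⟩
    · rw [hstep_ne k h]
      exact ⟨min_le_left _ _, min_le_min_left _
        (div_le_mul_norm_sub_div_norm_sub_of_lipschitz hL hτ0.le (hLip _ _) h)⟩
  exact ⟨fun k => (hstep k).1, min_le_of_forall_min_le_succ fun k => (hstep k).2,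
    lt_min ha0 (div_pos hτ0 hL)⟩

theorem adaptive_eg_plus_step_size_bounds (d : ℕ)
    (F : EuclideanSpace ℝ (Fin d) → EuclideanSpace ℝ (Fin d))
    (L τ γ : ℝ)
    (hL : 0 < L) (hLip : ∀ u v, ‖F u - F v‖ ≤ L * ‖u - v‖)
    (hτ0 : 0 < τ) (hτ1 : τ < 1) (hγ0 : 0 < γ) (hγ1 : γ ≤ 1)
    (u ubar : ℕ → EuclideanSpace ℝ (Fin d)) (a : ℕ → ℝ)
    (ha0 : 0 < a 0)
    (hstep_eq : ∀ k : ℕ, F (u k) = F (ubar k) → a (k + 1) = a k)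
    (hstep_ne : ∀ k : ℕ, F (u k) ≠ F (ubar k) →
      a (k + 1) = min (a k) (τ * ‖u k - ubar k‖ / ‖F (u k) - F (ubar k)‖))
    (hu : ∀ k : ℕ, u k = ubar k - a k • F (ubar k))
    (hubar : ∀ k : ℕ, ubar (k + 1) = ubar k - (a k * γ) • F (u k)) :
    (∀ k : ℕ, a (k + 1) ≤ a k) ∧
      (∀ k : ℕ, min (a 0) (τ / L) ≤ a k) ∧ 0 < min (a 0) (τ / L) :=
  adaptive_eg_plus_step_size_bounds_general d F L τ hL hLip hτ0 u ubar a ha0 hstep_eq hstep_ne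
end
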